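/- arXiv:math/9504209 — 3 statements merged into one kernel-verified Lean document; each statement's English description precedes it below -/
import Mathlib

section
/- If A ∈ SL(2,ℂ) is elliptic of order n with n ≥ 3, then ‖A − A⁻¹‖² · sin²(π/n) ≤ |(tr A)² − 4| · (‖A‖² − 2·cos²(π/n)). -/
open Matrix Real

noncomputable section

abbrev SL2C := Matrix.SpecialLinearGroup (Fin 2) ℂ

/-- The Frobenius (Hilbert–Schmidt) norm of a 2×2 complex matrix. -/
def fnorm (A : Matrix (Fin 2) (Fin 2) ℂ) : ℝ :=
  @norm _ Matrix.frobeniusSeminormedAddCommGroup.toNorm A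

instance : TopologicalSpace SL2C :=
  TopologicalSpace.induced (fun g => (g : Matrix (Fin 2) (Fin 2) ℂ)) inferInstance

/-- A subgroup of `SL(2,ℂ)` is discrete if it is a discrete subspace of `SL(2,ℂ)`. -/
def IsDiscreteSubgroup (Γ : Subgroup SL2C) : Prop := DiscreteTopology Γ

/-- `A` is elliptic of order `n`: `A^n = ±1` but `A^k ≠ ±1` for `1 ≤ k < n`. -/
def IsEllipticOfOrder (A : SL2C) (n : ℕ) : Prop :=
  (A ^ n = 1 ∨ A ^ n = -1) ∧ ∀ k : ℕ, 1 ≤ k → k < n → A ^ k ≠ 1 ∧ A ^ k ≠ -1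

/-- `A` is parabolic: `A ≠ ±1` and `tr A = ±2`. -/
def IsParabolic (A : SL2C) : Prop :=
  A ≠ 1 ∧ A ≠ -1 ∧ (Matrix.trace (A : Matrix (Fin 2) (Fin 2) ℂ) = 2 ∨
    Matrix.trace (A : Matrix (Fin 2) (Fin 2) ℂ) = -2)

/-- `S` and `T` have a common eigenvector in `ℂ²`. -/
def HasCommonEigenvector (S T : SL2C) : Prop :=
  ∃ v : Fin 2 → ℂ, v ≠ 0 ∧ (∃ a : ℂ, (S : Matrix (Fin 2) (Fin 2) ℂ).mulVec v = a • v) ∧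
    (∃ b : ℂ, (T : Matrix (Fin 2) (Fin 2) ℂ).mulVec v = b • v)

/-- A subgroup of `SL(2,ℂ)` is nonelementary if it contains two elements `S`, `T`
with `S^k ≠ ±1 ≠ T^k` for all `k ≥ 1` having no common eigenvector in `ℂ²`. -/
def IsNonelementary (Γ : Subgroup SL2C) : Prop :=
  ∃ S ∈ Γ, ∃ T ∈ Γ, (∀ k : ℕ, 1 ≤ k → S ^ k ≠ 1 ∧ S ^ k ≠ -1) ∧
    (∀ k : ℕ, 1 ≤ k → T ^ k ≠ 1 ∧ T ^ k ≠ -1) ∧ ¬ HasCommonEigenvector S T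

/-- The trace parameter `β(A) = tr²(A) - 4`. -/
def βp (A : SL2C) : ℂ := (Matrix.trace (A : Matrix (Fin 2) (Fin 2) ℂ)) ^ 2 - 4

/-- The commutator parameter `γ(A,B) = tr [A,B] - 2`. -/
def γp (A B : SL2C) : ℂ :=
  Matrix.trace ((A * B * A⁻¹ * B⁻¹ : SL2C) : Matrix (Fin 2) (Fin 2) ℂ) - 2

/-- `PSL(2,ℂ)`, the quotient of `SL(2,ℂ)` by its center `{1, -1}`. -/
abbrev PSL2C := SL2C ⧸ Subgroup.center SL2C

/-- The image in `PSL(2,ℂ)` of a subgroup of `SL(2,ℂ)`. -/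
def pslImage (Γ : Subgroup SL2C) : Subgroup PSL2C :=
  Γ.map (QuotientGroup.mk' (Subgroup.center SL2C))

open Classical in
/-- `t5`: the unique real `t > 1` with
`t (t - cos²(π/5)) + (t-1) √((t+1)(t+1-2 cos²(π/5))) = 1/2`. -/
def t5 : ℝ :=
  if h : ∃ t : ℝ, 1 < t ∧
      t * (t - Real.cos (π / 5) ^ 2) +
        (t - 1) * Real.sqrt ((t + 1) * (t + 1 - 2 * Real.cos (π / 5) ^ 2)) = 1 / 2
  then h.choose else 0

/-- The value `t n = cosh (c n)` where `c n` is the sharp displacement bound for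
discrete nonelementary groups with an elliptic generator of order `n ≥ 3`. -/
def tOf : ℕ → ℝ
  | 3 => (2 * Real.sqrt (8 + 2 * Real.sqrt 5) - (1 + Real.sqrt 5)) / (6 - Real.sqrt 5)
  | 4 => (Real.sqrt (6 + 2 * Real.sqrt 3) - Real.sqrt 3) / (3 - Real.sqrt 3)
  | 5 => t5
  | 6 => 17 / 16
  | n => (5 - 2 * Real.sin (π / n) ^ 2) / (4 + 2 * Real.sin (π / n) ^ 2)

/-!
An eigenvalue of an elliptic `A` of order `n` is a `2n`-th root of unity `e^{iπj/n}`, and `n ∤ j`: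
otherwise `tr A = ±2`, so `±A` is unipotent of finite order, hence `A = ±1`. Thus
`tr A = 2c` with `c = cos(πj/n)` real and `c² ≤ cos²(π/n)`. Since `A⁻¹ = adj A`,
`‖A - A⁻¹‖² = 4‖A‖² - 2|tr A|²`, and with `N = ‖A‖² ≥ 2|det A| = 2` and `C = cos²(π/n)` the two
sides of the inequality differ by `4 (N - 2) (C - c²) ≥ 0`.
-/

open scoped MatrixGroups

theorem pow_eq_one_add_mul_sub_one_of_sq_sub_one_eq_zero {R : Type*} [Ring R] {u : R}
    (hu : (u - 1) ^ 2 = 0) (k : ℕ) : u ^ k = 1 + k * (u - 1) := by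
  induction k with
  | zero => simp
  | succ k ih =>
    have hu' : (u - 1) * u = u - 1 := by
      calc (u - 1) * u = (u - 1) ^ 2 + (u - 1) := by noncomm_ring
        _ = u - 1 := by rw [hu, zero_add]
    rw [pow_succ, ih, add_mul, mul_assoc, hu']
    push_cast
    noncomm_ring

theorem eq_one_of_pow_eq_one_of_sq_sub_one_eq_zero {R : Type*} [Ring R] [IsAddTorsionFree R]
    {u : R} {k : ℕ} (hk : k ≠ 0) (hu : (u - 1) ^ 2 = 0) (h : u ^ k = 1) : u = 1 := by
  rw [pow_eq_one_add_mul_sub_one_of_sq_sub_one_eq_zero hu, add_eq_left, ← nsmul_eq_mul,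
    ← nsmul_zero k] at h
  exact sub_eq_zero.mp (nsmul_right_injective hk h)

namespace Real

theorem cos_pi_mul_div_le_cos_pi_div {n r : ℝ} (h1 : 1 ≤ r) (h2 : r ≤ n) :
    cos (π * r / n) ≤ cos (π / n) := by
  have hn : 0 < n := by linarith
  apply cos_le_cos_of_nonneg_of_le_pi (by positivity)
  · rw [div_le_iff₀ hn]
    nlinarith [pi_pos]
  · exact div_le_div_of_nonneg_right (le_mul_of_one_le_right pi_pos.le h1) hn.le

theorem cos_sq_pi_mul_div_le {n j : ℕ} (h : ¬ n ∣ j) :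
    cos (π * j / n) ^ 2 ≤ cos (π / n) ^ 2 := by
  rcases Nat.eq_zero_or_pos n with rfl | hn
  · simp
  have hr0 : 0 < j % n := Nat.pos_of_ne_zero (mt Nat.dvd_of_mod_eq_zero h)
  have hrn : j % n < n := Nat.mod_lt j hn
  have hperiod : cos (π * j / n) ^ 2 = cos (π * (j % n : ℕ) / n) ^ 2 := by
    have hsplit : π * j / n = π * (j % n : ℕ) / n + (j / n : ℕ) * π := by
      conv_lhs => rw [← Nat.mod_add_div j n]
      push_cast
      field_simp
    rw [hsplit, cos_add_nat_mul_pi, mul_pow, ← pow_mul, Even.neg_one_pow ⟨_, by ring⟩, one_mul]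
  have hle : cos (π * (j % n : ℕ) / n) ≤ cos (π / n) :=
    cos_pi_mul_div_le_cos_pi_div (by exact_mod_cast hr0) (by exact_mod_cast hrn.le)
  have hge : -cos (π / n) ≤ cos (π * (j % n : ℕ) / n) := by
    have h := cos_pi_mul_div_le_cos_pi_div (n := n) (r := (n - j % n : ℕ))
      (Nat.one_le_cast.mpr (by omega)) (by simp)
    rw [Nat.cast_sub hrn.le, mul_sub, sub_div, mul_div_cancel_right₀ _ (by positivity),
      cos_pi_sub] at h
    linarith
  rw [hperiod]
  exact sq_le_sq' hge hle

end Real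

namespace Matrix.SpecialLinearGroup

theorem sq_eq_trace_smul_sub_one {R : Type*} [CommRing R] [Nontrivial R] (A : SL(2, R)) :
    (A : Matrix (Fin 2) (Fin 2) R) ^ 2 =
      trace (A : Matrix (Fin 2) (Fin 2) R) • (A : Matrix (Fin 2) (Fin 2) R) - 1 := by
  have h := aeval_self_charpoly (A : Matrix (Fin 2) (Fin 2) R)
  rw [charpoly_fin_two, det_coe] at h
  simp only [map_add, map_sub, map_pow, Polynomial.aeval_X, map_mul, Polynomial.aeval_C, map_one,
    Algebra.algebraMap_eq_smul_one, smul_mul_assoc, one_mul] at h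
  rw [← sub_eq_zero, ← h]
  abel

variable {K : Type*} [Field K] [CharZero K]

theorem eq_one_of_trace_eq_two_of_pow_eq_one {B : SL(2, K)} {k : ℕ} (hk : k ≠ 0)
    (ht : trace (B : Matrix (Fin 2) (Fin 2) K) = 2) (h : B ^ k = 1) : B = 1 := by
  have := IsAddTorsionFree.of_module_rat (Matrix (Fin 2) (Fin 2) K)
  have hu : ((B : Matrix (Fin 2) (Fin 2) K) - 1) ^ 2 = 0 := by
    calc ((B : Matrix (Fin 2) (Fin 2) K) - 1) ^ 2 = B ^ 2 - (B + B) + 1 := by noncomm_ring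
      _ = 0 := by rw [sq_eq_trace_smul_sub_one, ht, two_smul]; abel
  apply Subtype.ext
  refine eq_one_of_pow_eq_one_of_sq_sub_one_eq_zero hk hu ?_
  rw [← coe_pow, h, coe_one]

theorem eq_one_or_eq_neg_one_of_trace_of_pow_eq_one {A : SL(2, K)} {k : ℕ} (hk : k ≠ 0)
    (ht : trace (A : Matrix (Fin 2) (Fin 2) K) = 2 ∨ trace (A : Matrix (Fin 2) (Fin 2) K) = -2)
    (h : A ^ k = 1) : A = 1 ∨ A = -1 := by
  rcases ht with ht | ht
  · exact .inl (eq_one_of_trace_eq_two_of_pow_eq_one hk ht h)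
  · refine .inr (neg_eq_iff_eq_neg.mp (eq_one_of_trace_eq_two_of_pow_eq_one (k := 2 * k)
      (by omega) (by rw [coe_neg, trace_neg, ht, neg_neg]) ?_))
    rw [(even_two_mul k).neg_pow, pow_mul', h, one_pow]

theorem exists_trace_eq_two_cos_of_pow_eq_one {A : SL(2, ℂ)} {m : ℕ} (hm : m ≠ 0)
    (h : A ^ m = 1) :
    ∃ j : ℕ, trace (A : Matrix (Fin 2) (Fin 2) ℂ) = (2 * Real.cos (2 * π * j / m) : ℝ) := by
  set M : Matrix (Fin 2) (Fin 2) ℂ := ↑A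
  obtain ⟨l, hl⟩ := spectrum.nonempty_of_isAlgClosed_of_finiteDimensional ℂ M
  have hroot : l ^ 2 - trace M * l + 1 = 0 := by
    rw [Matrix.mem_spectrum_iff_isRoot_charpoly, charpoly_fin_two, det_coe] at hl
    simpa using hl
  have hpow : l ^ m = 1 := by
    have := spectrum.pow_mem_pow M m hl
    rwa [← coe_pow, h, coe_one, spectrum.one_eq, Set.mem_singleton_iff] at this
  have : NeZero m := ⟨hm⟩
  obtain ⟨j, -, hj⟩ := (Complex.isPrimitiveRoot_exp m hm).eq_pow_of_pow_eq_one hpow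
  refine ⟨j, ?_⟩
  have hl0 : l ≠ 0 := by
    rintro rfl
    simp at hroot
  have hexp : l = Complex.exp ((2 * π * j / m : ℝ) * Complex.I) := by
    rw [← hj, ← Complex.exp_nat_mul]
    push_cast
    ring_nf
  have htr : trace M = l + l⁻¹ := by
    field_simp
    linear_combination -hroot
  rw [htr, hexp, ← Complex.exp_neg, Complex.ofReal_mul, Complex.ofReal_ofNat, Complex.ofReal_cos,
    Complex.two_cos, neg_mul]

end Matrix.SpecialLinearGroup

theorem fnorm_sq (M : Matrix (Fin 2) (Fin 2) ℂ) : fnorm M ^ 2 = ∑ i, ∑ j, ‖M i j‖ ^ 2 := by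
  rw [fnorm, @frobenius_norm_def, ← Real.sqrt_eq_rpow, Real.sq_sqrt (by positivity)]
  simp only [Real.rpow_two]

theorem fnorm_sub_adjugate_sq (M : Matrix (Fin 2) (Fin 2) ℂ) :
    fnorm (M - adjugate M) ^ 2 = 4 * fnorm M ^ 2 - 2 * ‖trace M‖ ^ 2 := by
  simp only [fnorm_sq, Fin.sum_univ_two, adjugate_fin_two, trace_fin_two, Matrix.sub_apply, of_apply,
    cons_val', cons_val_fin_one, cons_val_zero, cons_val_one, Complex.sq_norm, Complex.normSq_apply,
    Complex.sub_re, Complex.sub_im, Complex.neg_re, Complex.neg_im, sub_neg_eq_add, Complex.add_re,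
    Complex.add_im]
  ring

theorem two_mul_norm_det_le_fnorm_sq (M : Matrix (Fin 2) (Fin 2) ℂ) :
    2 * ‖det M‖ ≤ fnorm M ^ 2 := by
  have hdet : ‖det M‖ ≤ ‖M 0 0‖ * ‖M 1 1‖ + ‖M 0 1‖ * ‖M 1 0‖ := by
    rw [det_fin_two, ← norm_mul, ← norm_mul]
    exact norm_sub_le _ _
  rw [fnorm_sq]
  simp only [Fin.sum_univ_two]
  nlinarith [sq_nonneg (‖M 0 0‖ - ‖M 1 1‖), sq_nonneg (‖M 0 1‖ - ‖M 1 0‖)]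

namespace IsEllipticOfOrder

variable {A : SL2C} {n : ℕ}

theorem pow_two_mul_eq_one (hA : IsEllipticOfOrder A n) : A ^ (2 * n) = 1 := by
  rw [pow_mul']
  rcases hA.1 with h | h <;> simp [h]

theorem exists_trace_eq_two_cos (hA : IsEllipticOfOrder A n) (hn : 1 < n) :
    ∃ j : ℕ, ¬ n ∣ j ∧ trace (A : Matrix (Fin 2) (Fin 2) ℂ) = (2 * cos (π * j / n) : ℝ) := by
  have hA2n := hA.pow_two_mul_eq_one
  obtain ⟨j, hj⟩ := SpecialLinearGroup.exists_trace_eq_two_cos_of_pow_eq_one (by omega) hA2n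
  have htr : trace (A : Matrix (Fin 2) (Fin 2) ℂ) = (2 * cos (π * j / n) : ℝ) := by
    rw [hj]
    congr 3
    push_cast
    field_simp
  refine ⟨j, fun ⟨q, hq⟩ => ?_, htr⟩
  have htr2 : trace (A : Matrix (Fin 2) (Fin 2) ℂ) = 2 ∨
      trace (A : Matrix (Fin 2) (Fin 2) ℂ) = -2 := by
    rw [htr, hq, Nat.cast_mul, mul_comm (n : ℝ), ← mul_assoc,
      mul_div_cancel_right₀ _ (by positivity), mul_comm π, cos_nat_mul_pi]
    rcases neg_one_pow_eq_or ℝ q with h | h <;> simp [h]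
  have hA1 := hA.2 1 le_rfl hn
  rcases SpecialLinearGroup.eq_one_or_eq_neg_one_of_trace_of_pow_eq_one (by omega) htr2 hA2n
    with h | h
  · exact hA1.1 (by rw [pow_one, h])
  · exact hA1.2 (by rw [pow_one, h])

end IsEllipticOfOrder

/-- Lemma 2.9: for `A` elliptic of order `n ≥ 3`,
`m(A)² sin²(π/n) ≤ |tr²A - 4| (‖A‖² - 2 cos²(π/n))`. -/
theorem elliptic_axis_bound (A : SL2C) (n : ℕ) (hn : 3 ≤ n)
    (hA : IsEllipticOfOrder A n) :
    fnorm ((A : Matrix (Fin 2) (Fin 2) ℂ) - ((A⁻¹ : SL2C) : Matrix (Fin 2) (Fin 2) ℂ)) ^ 2 *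
        Real.sin (π / n) ^ 2 ≤
      ‖(Matrix.trace (A : Matrix (Fin 2) (Fin 2) ℂ)) ^ 2 - 4‖ *
        (fnorm (A : Matrix (Fin 2) (Fin 2) ℂ) ^ 2 - 2 * Real.cos (π / n) ^ 2) := by
  obtain ⟨j, hj, htr⟩ := hA.exists_trace_eq_two_cos (by omega)
  set c := cos (π * j / n)
  have hc : c ^ 2 ≤ cos (π / n) ^ 2 := cos_sq_pi_mul_div_le hj
  have hC : cos (π / n) ^ 2 ≤ 1 := cos_sq_le_one _
  have hN : 2 ≤ fnorm A ^ 2 := by simpa using two_mul_norm_det_le_fnorm_sq A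
  have hm : fnorm (A - ((A⁻¹ : SL2C) : Matrix (Fin 2) (Fin 2) ℂ)) ^ 2 =
      4 * fnorm A ^ 2 - 8 * c ^ 2 := by
    rw [show ((A⁻¹ : SL2C) : Matrix (Fin 2) (Fin 2) ℂ) = adjugate A from
        Matrix.SpecialLinearGroup.coe_inv A, fnorm_sub_adjugate_sq, htr, Complex.norm_real,
      Real.norm_eq_abs, sq_abs]
    ring
  have hβ : ‖trace (A : Matrix (Fin 2) (Fin 2) ℂ) ^ 2 - 4‖ = 4 - 4 * c ^ 2 := by
    rw [htr, ← Complex.ofReal_pow, ← Complex.ofReal_ofNat, ← Complex.ofReal_sub,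
      Complex.norm_real, Real.norm_eq_abs, abs_of_nonpos (by nlinarith)]
    ring
  rw [hm, hβ, sin_sq]
  nlinarith [mul_nonneg (sub_nonneg.2 hN) (sub_nonneg.2 hc)]

end
end

section
/- Let A, H ∈ SL(2,ℂ) with A elliptic of order n ≥ 3 and H = C·A·C⁻¹ or H = −C·A·C⁻¹ for some C ∈ SL(2,ℂ) (so A and H are conjugate elliptics of order n). If the image in PSL(2,ℂ) of the subgroup generated by A and H is isomorphic to the symmetric group S₄, then γ(A,H) = −1 and β(A) = β(H) = −2. -/
open Matrix Real

noncomputable section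

/-!
The images of `A` and `H` in `PSL(2,ℂ)` are conjugate of order `n` and generate a copy of `S₄`.
Elements of order 3 are even permutations and cannot generate `S₄`, so `n = 4`; two
non-commuting elements of order 4 in `S₄` have product and commutator of order 3. By
Cayley–Hamilton (`X² = (tr X) X - 1`), an element of order 4 in `PSL(2,ℂ)` has `tr² = 2` and one of
order 3 has `tr² = 1`. Fricke's identity `tr[A,H] = x² + y² + z² - xyz - 2`, with `x, y, z` the
traces of `A`, `H`, `AH`, then reads `tr[A,H] = 3 - xyz` with `(xyz)² = 4`, so `tr[A,H] ∈ {1, 5}`,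
and `tr[A,H]² = 1` leaves `tr[A,H] = 1`.
-/

open scoped commutatorElement
open Matrix.SpecialLinearGroup (coe_mul coe_inv coe_pow)

local notation "M₂" => Matrix (Fin 2) (Fin 2) ℂ

namespace Subgroup

variable {G P : Type*} [Group G] [Group P]

theorem commute_of_closure_pair_eq_top {a b : G} (h : closure {a, b} = ⊤) (hab : Commute a b)
    (x y : G) : Commute x y := by
  have := isMulCommutative_closure (k := {a, b}) (by
    simp only [Set.mem_insert_iff, Set.mem_singleton_iff]
    rintro _ (rfl | rfl) _ (rfl | rfl) <;> first | rfl | exact hab | exact hab.symm)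
  exact congrArg Subtype.val
    (this.is_comm.comm ⟨x, h ▸ mem_top x⟩ ⟨y, h ▸ mem_top y⟩)

theorem exists_injective_of_closure_pair_mulEquiv {x y : G} (e : closure ({x, y} : Set G) ≃* P) :
    ∃ f : P →* G, Function.Injective f ∧
      ∃ a b : P, closure {a, b} = ⊤ ∧ f a = x ∧ f b = y := by
  set x' : closure ({x, y} : Set G) := ⟨x, subset_closure (by simp)⟩
  set y' : closure ({x, y} : Set G) := ⟨y, subset_closure (by simp)⟩
  have hgen : closure {x', y'} = ⊤ := by
    rw [← closure_closure_coe_preimage (k := {x, y})]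
    congr 1
    ext ⟨z, hz⟩
    simp [x', y']
  refine ⟨(closure {x, y}).subtype.comp e.symm.toMonoidHom,
    Subtype.val_injective.comp e.symm.injective, e x', e y', ?_, by simp [x'], by simp [y']⟩
  simpa [MonoidHom.map_closure, Set.image_pair,
    map_top_of_surjective e.toMonoidHom e.surjective] using congrArg (map e.toMonoidHom) hgen

end Subgroup

namespace Equiv.Perm

variable {α : Type*} [Fintype α] [DecidableEq α]

theorem closure_le_alternatingGroup {s : Set (Perm α)} (hs : ∀ σ ∈ s, Odd (orderOf σ)) :
    Subgroup.closure s ≤ alternatingGroup α := by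
  refine (Subgroup.closure_le _).mpr fun σ hσ => mem_alternatingGroup.mpr ?_
  obtain ⟨k, hk⟩ := hs σ hσ
  have := congrArg sign (pow_orderOf_eq_one σ)
  rw [map_pow, map_one, Int.units_pow_eq_pow_mod_two, hk] at this
  simpa using this

set_option maxRecDepth 10000 in
theorem pow_three_eq_one_or_pow_four_eq_one (σ : Perm (Fin 4)) : σ ^ 3 = 1 ∨ σ ^ 4 = 1 := by
  revert σ
  decide

theorem orderOf_eq_three_or_four {σ : Perm (Fin 4)} (h : 3 ≤ orderOf σ) :
    orderOf σ = 3 ∨ orderOf σ = 4 := by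
  have hle : orderOf σ ≤ 4 := by
    rcases pow_three_eq_one_or_pow_four_eq_one σ with h' | h' <;>
      linarith [Nat.le_of_dvd (by norm_num) (orderOf_dvd_of_pow_eq_one h')]
  omega

theorem orderOf_eq_four_of_closure_pair_eq_top {a b : Perm (Fin 4)}
    (hgen : Subgroup.closure {a, b} = ⊤) (hab : orderOf a = orderOf b) (h3 : 3 ≤ orderOf a) :
    orderOf a = 4 := by
  refine (orderOf_eq_three_or_four h3).resolve_left fun ha => ?_
  have hle := closure_le_alternatingGroup (s := {a, b}) (by simp [← hab, ha]; decide)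
  have hswap := (hgen ▸ hle) (Subgroup.mem_top (swap 0 1))
  rw [mem_alternatingGroup, sign_swap (by decide)] at hswap
  exact absurd hswap (by decide)

set_option maxRecDepth 10000 in
theorem orderOf_commutator_eq_three {a b : Perm (Fin 4)} (hgen : Subgroup.closure {a, b} = ⊤)
    (ha : orderOf a = 4) (hb : orderOf b = 4) : orderOf ⁅a, b⁆ = 3 ∧ orderOf (a * b) = 3 := by
  have key : ∀ σ τ : Perm (Fin 4), σ ^ 4 = 1 → σ ^ 2 ≠ 1 → τ ^ 4 = 1 → τ ^ 2 ≠ 1 →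
      σ * τ ≠ τ * σ → ⁅σ, τ⁆ ^ 3 = 1 ∧ ⁅σ, τ⁆ ≠ 1 ∧ (σ * τ) ^ 3 = 1 ∧ σ * τ ≠ 1 := by
    decide
  have hnc : a * b ≠ b * a := fun h => by
    have := (Subgroup.commute_of_closure_pair_eq_top hgen h (swap 0 1) (swap 1 2)).eq
    revert this
    decide
  obtain ⟨hcomm, hcomm1, hmul, hmul1⟩ := key a b (ha ▸ pow_orderOf_eq_one a :)
    (pow_ne_one_of_lt_orderOf (by norm_num) (by omega)) (hb ▸ pow_orderOf_eq_one b :)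
    (pow_ne_one_of_lt_orderOf (by norm_num) (by omega)) hnc
  exact ⟨orderOf_eq_prime hcomm hcomm1, orderOf_eq_prime hmul hmul1⟩

end Equiv.Perm

namespace SL2C

theorem mem_center_of_coe_eq_smul_one {X : SL2C} {c : ℂ} (h : (X : M₂) = c • 1) :
    X ∈ Subgroup.center SL2C :=
  Subgroup.mem_center_iff.mpr fun _ => Subtype.ext (by simp [coe_mul, h])

theorem mem_center_iff_eq_one_or_eq_neg_one {X : SL2C} :
    X ∈ Subgroup.center SL2C ↔ X = 1 ∨ X = -1 := by
  refine ⟨fun h => ?_, ?_⟩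
  · obtain ⟨r, hr, hX⟩ := Matrix.SpecialLinearGroup.mem_center_iff.mp h
    have : (r - 1) * (r + 1) = 0 := by
      rw [Fintype.card_fin] at hr
      linear_combination hr
    rcases mul_eq_zero.mp this with hr | hr
    · rw [eq_of_sub_eq_zero hr, map_one] at hX
      exact .inl (Subtype.ext hX.symm)
    · rw [eq_neg_of_add_eq_zero_left hr, map_neg, map_one] at hX
      exact .inr (Subtype.ext (by simp [← hX]))
  · rintro (rfl | rfl)
    · exact Subgroup.one_mem _
    · exact mem_center_of_coe_eq_smul_one (c := -1) (by simp)

theorem coe_pow_eq_one_iff {X : SL2C} {k : ℕ} :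
    (X : PSL2C) ^ k = 1 ↔ X ^ k = 1 ∨ X ^ k = -1 := by
  rw [← QuotientGroup.mk_pow, QuotientGroup.eq_one_iff, mem_center_iff_eq_one_or_eq_neg_one]

theorem coe_neg (X : SL2C) : ((-X : SL2C) : PSL2C) = X := by
  rw [← neg_one_mul, QuotientGroup.mk_mul,
    (QuotientGroup.eq_one_iff _).mpr (mem_center_iff_eq_one_or_eq_neg_one.mpr (.inr rfl)), one_mul]

theorem orderOf_coe_eq_of_isEllipticOfOrder {A : SL2C} {n : ℕ} (hA : IsEllipticOfOrder A n)
    (hn : 0 < n) : orderOf (A : PSL2C) = n := by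
  refine (orderOf_eq_iff hn).mpr ⟨coe_pow_eq_one_iff.mpr hA.1, fun k hk hk0 h => ?_⟩
  rcases coe_pow_eq_one_iff.mp h with h | h
  exacts [(hA.2 k hk0 hk).1 h, (hA.2 k hk0 hk).2 h]

theorem orderOf_coe_eq_of_conj {A H C : SL2C} (h : H = C * A * C⁻¹ ∨ H = -(C * A * C⁻¹)) :
    orderOf (H : PSL2C) = orderOf (A : PSL2C) := by
  have hH : (H : PSL2C) = C * A * (C : PSL2C)⁻¹ := by
    rcases h with rfl | rfl
    · rfl
    · rw [coe_neg]; rfl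
  rw [hH]
  exact (SemiconjBy.orderOf_eq (C : PSL2C) (by simp [SemiconjBy, mul_assoc])).symm

theorem coe_sq (X : SL2C) : (X : M₂) ^ 2 = trace (X : M₂) • (X : M₂) - 1 := by
  have hd := X.2
  rw [det_fin_two] at hd
  ext i j
  fin_cases i <;> fin_cases j <;>
    simp [sq, mul_apply, trace_fin_two] <;> first | ring1 | linear_combination -hd

theorem coe_pow_three (X : SL2C) :
    ((X ^ 3 : SL2C) : M₂) = (trace (X : M₂) ^ 2 - 1) • (X : M₂) - trace (X : M₂) • 1 := by
  rw [coe_pow, pow_succ, coe_sq, sub_mul, smul_mul_assoc, one_mul, ← sq, coe_sq]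
  module

theorem coe_pow_four (X : SL2C) :
    ((X ^ 4 : SL2C) : M₂) = (trace (X : M₂) ^ 3 - 2 * trace (X : M₂)) • (X : M₂)
      + (1 - trace (X : M₂) ^ 2) • 1 := by
  rw [coe_pow, pow_succ, ← coe_pow, coe_pow_three, sub_mul, smul_mul_assoc, smul_mul_assoc,
    one_mul, ← sq, coe_sq]
  module

theorem eq_zero_of_smul_coe_eq_smul_one {X : SL2C} (hX : (X : PSL2C) ≠ 1) {r c : ℂ}
    (h : r • (X : M₂) = c • 1) : r = 0 := by
  by_contra hr
  refine hX ((QuotientGroup.eq_one_iff X).mpr (mem_center_of_coe_eq_smul_one (c := r⁻¹ * c) ?_))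
  rw [mul_smul, ← h, smul_smul, inv_mul_cancel₀ hr, one_smul]

theorem exists_coe_pow_eq_smul_one {X : SL2C} {k : ℕ} (h : (X : PSL2C) ^ k = 1) :
    ∃ c : ℂ, ((X ^ k : SL2C) : M₂) = c • 1 := by
  rcases coe_pow_eq_one_iff.mp h with h | h <;> rw [h]
  exacts [⟨1, by simp⟩, ⟨-1, by simp⟩]

theorem trace_sq_eq_one_of_orderOf_eq_three {X : SL2C} (h : orderOf (X : PSL2C) = 3) :
    trace (X : M₂) ^ 2 = 1 := by
  obtain ⟨c, hc⟩ := exists_coe_pow_eq_smul_one (h ▸ pow_orderOf_eq_one (X : PSL2C) :)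
  have hX : (X : PSL2C) ≠ 1 := fun h1 => by simp [h1] at h
  rw [coe_pow_three] at hc
  have := eq_zero_of_smul_coe_eq_smul_one hX
    (r := trace (X : M₂) ^ 2 - 1) (c := c + trace (X : M₂))
    (by linear_combination (norm := module) hc)
  linear_combination this

theorem trace_sq_eq_two_of_orderOf_eq_four {X : SL2C} (h : orderOf (X : PSL2C) = 4) :
    trace (X : M₂) ^ 2 = 2 := by
  obtain ⟨c, hc⟩ := exists_coe_pow_eq_smul_one (h ▸ pow_orderOf_eq_one (X : PSL2C) :)
  have hX : (X : PSL2C) ≠ 1 := fun h1 => by simp [h1] at h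
  have hX2 : (X : PSL2C) ^ 2 ≠ 1 := pow_ne_one_of_lt_orderOf (by norm_num) (by omega)
  have htr : trace (X : M₂) ≠ 0 := fun h0 => hX2 <| by
    rw [← QuotientGroup.mk_pow, QuotientGroup.eq_one_iff]
    exact mem_center_of_coe_eq_smul_one (c := -1) (by rw [coe_pow, coe_sq, h0]; module)
  rw [coe_pow_four] at hc
  have := eq_zero_of_smul_coe_eq_smul_one hX
    (r := trace (X : M₂) ^ 3 - 2 * trace (X : M₂)) (c := c - (1 - trace (X : M₂) ^ 2))
    (by linear_combination (norm := module) hc)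
  have : trace (X : M₂) * (trace (X : M₂) ^ 2 - 2) = 0 := by linear_combination this
  linear_combination (mul_eq_zero.mp this).resolve_left htr

theorem trace_commutator (A B : SL2C) :
    trace ((⁅A, B⁆ : SL2C) : M₂) = trace (A : M₂) ^ 2 + trace (B : M₂) ^ 2
      + trace ((A * B : SL2C) : M₂) ^ 2
      - trace (A : M₂) * trace (B : M₂) * trace ((A * B : SL2C) : M₂) - 2 := by
  have hA := A.2
  have hB := B.2
  rw [det_fin_two] at hA hB
  rw [commutatorElement_def, coe_mul, coe_mul, coe_mul, coe_inv, coe_inv,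
    adjugate_fin_two, adjugate_fin_two]
  simp [trace_fin_two, mul_apply, Fin.sum_univ_two]
  linear_combination ((A 0 0 + A 1 1) ^ 2 - 2 * (A 0 0 * A 1 1 - A 0 1 * A 1 0)) * hB
    + ((B 0 0 + B 1 1) ^ 2 - 2) * hA

theorem trace_commutator_eq_one {A B : SL2C} (hA : trace (A : M₂) ^ 2 = 2)
    (hB : trace (B : M₂) ^ 2 = 2) (hAB : trace ((A * B : SL2C) : M₂) ^ 2 = 1)
    (hK : trace ((⁅A, B⁆ : SL2C) : M₂) ^ 2 = 1) : trace ((⁅A, B⁆ : SL2C) : M₂) = 1 := by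
  set x := trace (A : M₂)
  set y := trace (B : M₂)
  set z := trace ((A * B : SL2C) : M₂)
  set k := trace ((⁅A, B⁆ : SL2C) : M₂)
  have hk : k = 3 - x * y * z := by linear_combination trace_commutator A B + hA + hB + hAB
  have hxyz : (x * y * z) ^ 2 = 4 := by
    linear_combination y ^ 2 * z ^ 2 * hA + 2 * z ^ 2 * hB + 4 * hAB
  linear_combination (1 - (k + 3 - x * y * z) / 6) * hk - hxyz / 6 + hK / 6

end SL2C

theorem pslImage_closure_pair (A H : SL2C) :
    pslImage (Subgroup.closure {A, H}) = Subgroup.closure {(A : PSL2C), (H : PSL2C)} := by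
  rw [pslImage, MonoidHom.map_closure, Set.image_pair]
  rfl

/-- Lemma 4.8, `S₄` case: parameters of `S₄` with conjugate elliptic generators. -/
theorem params_S4 (A H : SL2C) (n : ℕ) (hn : 3 ≤ n)
    (hA : IsEllipticOfOrder A n)
    (hconj : ∃ C : SL2C, H = C * A * C⁻¹ ∨ H = -(C * A * C⁻¹))
    (hiso : Nonempty (↥(pslImage (Subgroup.closure {A, H})) ≃* Equiv.Perm (Fin 4))) :
    γp A H = -1 ∧ βp A = -2 ∧ βp H = -2 := by
  obtain ⟨e⟩ := hiso
  obtain ⟨f, hf, a, b, hgen, hfa, hfb⟩ := Subgroup.exists_injective_of_closure_pair_mulEquiv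
    ((MulEquiv.subgroupCongr (pslImage_closure_pair A H)).symm.trans e)
  have hA_ord : orderOf (A : PSL2C) = n := SL2C.orderOf_coe_eq_of_isEllipticOfOrder hA (by omega)
  obtain ⟨C, hC⟩ := hconj
  have hH_ord : orderOf (H : PSL2C) = n := (SL2C.orderOf_coe_eq_of_conj hC).trans hA_ord
  have ha : orderOf a = n := by rw [← orderOf_injective f hf, hfa, hA_ord]
  have hb : orderOf b = n := by rw [← orderOf_injective f hf, hfb, hH_ord]
  have hn4 : n = 4 := ha ▸ Equiv.Perm.orderOf_eq_four_of_closure_pair_eq_top hgen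
    (ha.trans hb.symm) (ha ▸ hn)
  obtain ⟨hcomm, hmul⟩ := Equiv.Perm.orderOf_commutator_eq_three hgen (ha.trans hn4) (hb.trans hn4)
  have hx := SL2C.trace_sq_eq_two_of_orderOf_eq_four (hA_ord.trans hn4)
  have hy := SL2C.trace_sq_eq_two_of_orderOf_eq_four (hH_ord.trans hn4)
  have hz := SL2C.trace_sq_eq_one_of_orderOf_eq_three (X := A * H) <| by
    rw [QuotientGroup.mk_mul, ← hfa, ← hfb, ← map_mul, orderOf_injective f hf, hmul]
  have hk := SL2C.trace_sq_eq_one_of_orderOf_eq_three (X := ⁅A, H⁆) <| by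
    rw [← QuotientGroup.mk'_apply, map_commutatorElement, QuotientGroup.mk'_apply,
      QuotientGroup.mk'_apply, ← hfa, ← hfb, ← map_commutatorElement, orderOf_injective f hf,
      hcomm]
  refine ⟨?_, by rw [βp, hx]; norm_num, by rw [βp, hy]; norm_num⟩
  rw [γp, ← commutatorElement_def, SL2C.trace_commutator_eq_one hx hy hz hk]
  norm_num
end
end

section
/- (Sharpness of the parabolic bound.) Let A = !![1, 1/√2; 0, 1] and B = !![0, 1/√2; −√2, 0], viewed as elements of SL(2,ℂ) (both have determinant 1). Then the subgroup generated by A and B is discrete and nonelementary (it is conjugate to the modular group), A is parabolic, and ‖A‖² = ‖B‖² = 5/2; hence both A and B move the base point of hyperbolic 3-space exactly hyperbolic distance arccosh(5/4), so the lower bound arccosh(5/4) for discrete nonelementary groups with a parabolic generator is attained. -/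
open Matrix Real

noncomputable section

/-!
Put `x = √2` and `D = diag(c⁻¹, c)` with `c² = x`. Then `D⁻¹ A D = !![1, 1; 0, 1]` and
`D⁻¹ B D = !![0, 1; -1, 0]`, so `⟨A, B⟩` lies in `D SL(2,ℤ) D⁻¹`, which is discrete because
`SL(2,ℤ)` is. The parabolic `A` fixes only the line `ℂ e₀`, while its conjugate
`B A B⁻¹ = !![1, 0; -x, 1]` fixes only `ℂ e₁`; both have infinite order modulo `±1`, so the
group is nonelementary.
-/

open scoped Pointwise MatrixGroups
open ConjAct

namespace Matrix.SpecialLinearGroup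

variable {n : Type*} [Fintype n] [DecidableEq n]

instance discreteTopology_range_map_intCast_complex :
    DiscreteTopology (map (n := n) (Int.castRingHom ℂ)).range :=
  Complex.isClosedEmbedding_intCast.specialLinearGroup_map.1.toHomeomorph.discreteTopology

theorem mem_conj_range_map_intCast {D g : SpecialLinearGroup n ℂ} (M : SpecialLinearGroup n ℤ)
    (h : (g : Matrix n n ℂ) * D = D * (M : Matrix n n ℤ).map ((↑) : ℤ → ℂ)) :
    g ∈ toConjAct D • (map (n := n) (Int.castRingHom ℂ)).range := by
  have hg : g = D * map (Int.castRingHom ℂ) M * D⁻¹ := by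
    rw [eq_mul_inv_iff_mul_eq]
    exact Subtype.ext h
  rw [hg]
  exact Subgroup.smul_mem_pointwise_smul _ _ _ ⟨M, rfl⟩

theorem discreteTopology_of_le_conj_range_map_intCast {Γ : Subgroup (SpecialLinearGroup n ℂ)}
    {D : SpecialLinearGroup n ℂ}
    (h : Γ ≤ toConjAct D • (map (n := n) (Int.castRingHom ℂ)).range) : DiscreteTopology Γ :=
  DiscreteTopology.of_subset (inferInstanceAs (DiscreteTopology (toConjAct D • _ : Subgroup _))) h

end Matrix.SpecialLinearGroup

theorem conj_ne_one_and_ne_neg_one {G : Type*} [Group G] [HasDistribNeg G] {g : G} (h : G)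
    (hg : g ≠ 1 ∧ g ≠ -1) : h * g * h⁻¹ ≠ 1 ∧ h * g * h⁻¹ ≠ -1 := by
  refine ⟨fun h1 => hg.1 (conj_eq_one_iff.mp h1), fun h1 => hg.2 ?_⟩
  calc g = h⁻¹ * (h * g * h⁻¹) * h := by group
    _ = -1 := by rw [h1, mul_neg_one, neg_mul, inv_mul_cancel]

section Unipotent

variable {R : Type*} [CommRing R]

theorem upper_unipotent_pow (x : R) (k : ℕ) :
    (!![1, x; 0, 1] : Matrix (Fin 2) (Fin 2) R) ^ k = !![1, k * x; 0, 1] := by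
  induction k with
  | zero => simp [one_fin_two]
  | succ k ih =>
    rw [pow_succ, ih, mul_fin_two]
    ext i j
    fin_cases i <;> fin_cases j <;> simp [add_mul, add_comm]

variable [IsDomain R]

theorem eigenvector_upper_unipotent_apply_one {x a : R} {v : Fin 2 → R} (hx : x ≠ 0)
    (hv : !![1, x; 0, 1] *ᵥ v = a • v) : v 1 = 0 := by
  have h0 : v 0 + x * v 1 = a * v 0 := by
    simpa [mulVec, dotProduct, Fin.sum_univ_two] using congrFun hv 0
  have h1 : v 1 = a * v 1 := by simpa [mulVec, dotProduct, Fin.sum_univ_two] using congrFun hv 1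
  by_contra hv1
  have ha : a = 1 := by
    have : (a - 1) * v 1 = 0 := by linear_combination -h1
    exact sub_eq_zero.mp ((mul_eq_zero.mp this).resolve_right hv1)
  exact mul_ne_zero hx hv1 (by linear_combination h0 + v 0 * ha)

theorem eigenvector_lower_unipotent_apply_zero {y a : R} {v : Fin 2 → R} (hy : y ≠ 0)
    (hv : !![1, 0; y, 1] *ᵥ v = a • v) : v 0 = 0 := by
  have h0 : v 0 = a * v 0 := by simpa [mulVec, dotProduct, Fin.sum_univ_two] using congrFun hv 0
  have h1 : y * v 0 + v 1 = a * v 1 := by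
    simpa [mulVec, dotProduct, Fin.sum_univ_two] using congrFun hv 1
  by_contra hv0
  have ha : a = 1 := by
    have : (a - 1) * v 0 = 0 := by linear_combination -h0
    exact sub_eq_zero.mp ((mul_eq_zero.mp this).resolve_right hv0)
  exact mul_ne_zero hy hv0 (by linear_combination h1 + v 1 * ha)

theorem pow_ne_one_and_ne_neg_one_of_coe_eq_upper [CharZero R] {g : SL(2, R)} {x : R}
    (hx : x ≠ 0) (hg : (g : Matrix (Fin 2) (Fin 2) R) = !![1, x; 0, 1]) {k : ℕ} (hk : 1 ≤ k) :
    g ^ k ≠ 1 ∧ g ^ k ≠ -1 := by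
  have h01 : ((g ^ k : SL(2, R)) : Matrix (Fin 2) (Fin 2) R) 0 1 ≠ 0 := by
    rw [Matrix.SpecialLinearGroup.coe_pow, hg, upper_unipotent_pow]
    simpa using ⟨by omega, hx⟩
  constructor <;> rintro h <;> simp [h] at h01

end Unipotent

theorem isParabolic_of_coe_eq_upper {A : SL2C} {x : ℂ} (hx : x ≠ 0)
    (hA : (A : Matrix (Fin 2) (Fin 2) ℂ) = !![1, x; 0, 1]) : IsParabolic A := by
  have hA1 := pow_ne_one_and_ne_neg_one_of_coe_eq_upper hx hA le_rfl
  rw [pow_one] at hA1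
  exact ⟨hA1.1, hA1.2, Or.inl (by rw [hA, trace_fin_two]; norm_num)⟩

section ScaledModularGenerators

variable {A B : SL2C} {x : ℂ}

theorem isDiscreteSubgroup_closure_of_coe_eq_scaled_modular (hx : x ≠ 0)
    (hA : (A : Matrix (Fin 2) (Fin 2) ℂ) = !![1, x⁻¹; 0, 1])
    (hB : (B : Matrix (Fin 2) (Fin 2) ℂ) = !![0, x⁻¹; -x, 0]) :
    IsDiscreteSubgroup (Subgroup.closure {A, B}) := by
  obtain ⟨c, hc⟩ := IsAlgClosed.exists_pow_nat_eq x two_pos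
  have hc0 : c ≠ 0 := by rintro rfl; exact hx (by simpa using hc.symm)
  let D : SL2C := ⟨!![c⁻¹, 0; 0, c], by simp [det_fin_two, hc0]⟩
  refine Matrix.SpecialLinearGroup.discreteTopology_of_le_conj_range_map_intCast (D := D) ?_
  rw [Subgroup.closure_le, Set.insert_subset_iff, Set.singleton_subset_iff]
  constructor
  · refine Matrix.SpecialLinearGroup.mem_conj_range_map_intCast ModularGroup.T ?_
    rw [hA, ModularGroup.coe_T, ← hc]
    ext i j; fin_cases i <;> fin_cases j <;> simp [D, vecMul, dotProduct, sq, hc0]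
  · refine Matrix.SpecialLinearGroup.mem_conj_range_map_intCast (-ModularGroup.S) ?_
    rw [hB, Matrix.SpecialLinearGroup.coe_neg, ModularGroup.coe_S, ← hc]
    ext i j; fin_cases i <;> fin_cases j <;> simp [D, vecMul, dotProduct, sq, hc0]

theorem isNonelementary_closure_of_coe_eq_scaled_modular (hx : x ≠ 0)
    (hA : (A : Matrix (Fin 2) (Fin 2) ℂ) = !![1, x⁻¹; 0, 1])
    (hB : (B : Matrix (Fin 2) (Fin 2) ℂ) = !![0, x⁻¹; -x, 0]) :
    IsNonelementary (Subgroup.closure {A, B}) := by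
  have hAmem : A ∈ Subgroup.closure {A, B} := Subgroup.subset_closure (by simp)
  have hBmem : B ∈ Subgroup.closure {A, B} := Subgroup.subset_closure (by simp)
  have hT : ((B * A * B⁻¹ : SL2C) : Matrix (Fin 2) (Fin 2) ℂ) = !![1, 0; -x, 1] := by
    simp only [Matrix.SpecialLinearGroup.coe_mul, Matrix.SpecialLinearGroup.coe_inv, hA, hB,
      adjugate_fin_two_of, mul_fin_two]
    ext i j; fin_cases i <;> fin_cases j <;> simp [hx]
  have hApow k (hk : 1 ≤ k) :=
    pow_ne_one_and_ne_neg_one_of_coe_eq_upper (inv_ne_zero hx) hA hk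
  refine ⟨A, hAmem, B * A * B⁻¹, mul_mem (mul_mem hBmem hAmem) (inv_mem hBmem), hApow,
    fun k hk => by rw [conj_pow]; exact conj_ne_one_and_ne_neg_one B (hApow k hk), ?_⟩
  rintro ⟨v, hv, ⟨a, hva⟩, ⟨b, hvb⟩⟩
  rw [hA] at hva
  rw [hT] at hvb
  refine hv (funext fun i => ?_)
  fin_cases i
  · exact eigenvector_lower_unipotent_apply_zero (neg_ne_zero.mpr hx) hvb
  · exact eigenvector_upper_unipotent_apply_one (inv_ne_zero hx) hva

end ScaledModularGenerators

theorem fnorm_sq_eq (M : Matrix (Fin 2) (Fin 2) ℂ) :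
    fnorm M ^ 2 = ‖M 0 0‖ ^ 2 + ‖M 0 1‖ ^ 2 + ‖M 1 0‖ ^ 2 + ‖M 1 1‖ ^ 2 := by
  rw [fnorm, frobenius_norm_def, ← Real.rpow_natCast, ← Real.rpow_mul (by positivity)]
  norm_num [Fin.sum_univ_two, add_assoc]

/-- Sharpness of Theorem 1.18: the modular-group generators realize the bound
`arccosh (5/4)`, i.e. `‖A‖² = ‖B‖² = 5/2`. -/
theorem margulis_parabolic_sharp (A B : SL2C)
    (hA : (A : Matrix (Fin 2) (Fin 2) ℂ) = !![1, ((Real.sqrt 2 : ℝ) : ℂ)⁻¹; 0, 1])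
    (hB : (B : Matrix (Fin 2) (Fin 2) ℂ) =
      !![0, ((Real.sqrt 2 : ℝ) : ℂ)⁻¹; -((Real.sqrt 2 : ℝ) : ℂ), 0]) :
    IsDiscreteSubgroup (Subgroup.closure {A, B}) ∧
      IsNonelementary (Subgroup.closure {A, B}) ∧
      IsParabolic A ∧
      fnorm (A : Matrix (Fin 2) (Fin 2) ℂ) ^ 2 = 5 / 2 ∧
      fnorm (B : Matrix (Fin 2) (Fin 2) ℂ) ^ 2 = 5 / 2 := by
  have hx : ((Real.sqrt 2 : ℝ) : ℂ) ≠ 0 := by simp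
  have hx2 : ‖((Real.sqrt 2 : ℝ) : ℂ)‖ ^ 2 = 2 := by simp
  refine ⟨isDiscreteSubgroup_closure_of_coe_eq_scaled_modular hx hA hB,
    isNonelementary_closure_of_coe_eq_scaled_modular hx hA hB,
    isParabolic_of_coe_eq_upper (inv_ne_zero hx) hA, ?_, ?_⟩
  · rw [fnorm_sq_eq, hA]
    norm_num [hx2]
  · rw [fnorm_sq_eq, hB]
    norm_num [hx2]

end
end
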